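/- O(1/k) convergence rate of the exact surrogate (majorize–minimize) iteration: In the surrogate setup, assume τ > ‖W‖₂, let Ω⁽⁰⁾ ∈ 𝒮, and for i ≥ 0 let Ω^{(i+1)} be the (unique) minimizer of g(·, Ω^{(i)}) over 𝒮. Then for every global minimizer Ω° of f over 𝒮 and every integer k ≥ 1: (1/k) Σ_{i=1}^{k} f(Ω^{(i)}) − f(Ω°) ≤ τ² ‖Ω⁽⁰⁾ − Ω°‖_F² / (2k), and consequently f(Ω^{(k)}) − f(Ω°) ≤ τ² ‖Ω⁽⁰⁾ − Ω°‖_F² / (2k). -/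

import Mathlib

open Matrix
open scoped Classical

noncomputable section

/-- Squared Euclidean norm of a vector. -/
def sqnorm {ι : Type*} [Fintype ι] (v : ι → ℝ) : ℝ := ∑ i, v i ^ 2

/-- Spectral norm (ℓ₂ operator norm) of a real matrix:
the supremum of `‖A v‖₂` over vectors `v` with `‖v‖₂ ≤ 1`. -/
def specNorm {ι κ : Type*} [Fintype ι] [Fintype κ] (A : Matrix ι κ ℝ) : ℝ :=
  sSup {c : ℝ | ∃ v : κ → ℝ, sqnorm v ≤ 1 ∧ c = Real.sqrt (sqnorm (A.mulVec v))}

/-- (Columnwise) vectorization of `Ω ∈ ℝ^{(p+1)×p}`, using the product index set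
`Fin (p+1) × Fin p` for `ℝ^{(p+1)p}`. -/
def vecM {p : ℕ} (Ω : Matrix (Fin (p + 1)) (Fin p) ℝ) : Fin (p + 1) × Fin p → ℝ :=
  fun ik => Ω ik.1 ik.2

/-- The convex penalty
`P(Ω) = Σ_j (λ_b)_j |b_j| + Σ_{j,k} (Λ_Φ)_{jk} |Φ_{jk}| + Σ_k (λ_Ω)_k ‖Ω[:,k]‖₂`,
where `Ω = [b, Φᵀ]ᵀ`, i.e. `b_j = Ω 0 j` and `Φ j k = Ω k.succ j`. -/
def Pen {p : ℕ} (lb : Fin p → ℝ) (LPhi : Matrix (Fin p) (Fin p) ℝ) (lO : Fin p → ℝ)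
    (Ω : Matrix (Fin (p + 1)) (Fin p) ℝ) : ℝ :=
  (∑ j, lb j * |Ω 0 j|) + (∑ j, ∑ k, LPhi j k * |Ω k.succ j|)
    + ∑ k, lO k * Real.sqrt (∑ i, Ω i k ^ 2)

/-- The quadratic loss `ℓ(Ω) = (1/2)‖y − W vec(Ω)‖₂²`. -/
def lossL {n p : ℕ} (W : Matrix (Fin n) (Fin (p + 1) × Fin p) ℝ) (y : Fin n → ℝ)
    (Ω : Matrix (Fin (p + 1)) (Fin p) ℝ) : ℝ :=
  (1 / 2) * ∑ i, (y i - W.mulVec (vecM Ω) i) ^ 2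

/-- The objective `f(Ω) = ℓ(Ω) + P(Ω)`. -/
def fObj {n p : ℕ} (W : Matrix (Fin n) (Fin (p + 1) × Fin p) ℝ) (y : Fin n → ℝ)
    (lb : Fin p → ℝ) (LPhi : Matrix (Fin p) (Fin p) ℝ) (lO : Fin p → ℝ)
    (Ω : Matrix (Fin (p + 1)) (Fin p) ℝ) : ℝ :=
  lossL W y Ω + Pen lb LPhi lO Ω

/-- The surrogate
`g(Ω, Ω') = ℓ(Ω') − ⟨Wᵀ(y − W vec Ω'), vec Ω − vec Ω'⟩ + (τ²/2)‖Ω − Ω'‖_F² + P(Ω)`. -/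
def gSur {n p : ℕ} (W : Matrix (Fin n) (Fin (p + 1) × Fin p) ℝ) (y : Fin n → ℝ)
    (lb : Fin p → ℝ) (LPhi : Matrix (Fin p) (Fin p) ℝ) (lO : Fin p → ℝ) (τ : ℝ)
    (Ω Ω' : Matrix (Fin (p + 1)) (Fin p) ℝ) : ℝ :=
  lossL W y Ω'
    - (∑ u : Fin (p + 1) × Fin p,
        Wᵀ.mulVec (fun i => y i - W.mulVec (vecM Ω') i) u * (vecM Ω u - vecM Ω' u))
    + (τ ^ 2 / 2) * (∑ i, ∑ k, (Ω i k - Ω' i k) ^ 2)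
    + Pen lb LPhi lO Ω

/-- The feasible set `𝒮 = {Ω = [b, Φᵀ]ᵀ : Φ = Φᵀ}`. -/
def Sfeas (p : ℕ) : Set (Matrix (Fin (p + 1)) (Fin p) ℝ) :=
  {Ω | ∀ j k : Fin p, Ω j.succ k = Ω k.succ j}


/-!
Since `τ ≥ ‖W‖₂`, the surrogate `g(·, Ω')` majorizes `f`, and it exceeds `f` by at most
`(τ²/2)‖· − Ω'‖_F²`. Being a quadratic with Hessian `τ² I` plus the convex penalty, `g(·, Ω')` is
`τ²`-strongly convex, so its minimizer `Ω⁽ⁱ⁺¹⁾` over the convex set `𝒮` satisfies the three-point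
inequality `g(Ω⁽ⁱ⁺¹⁾, Ω⁽ⁱ⁾) + (τ²/2)‖Ω⁽ⁱ⁺¹⁾ − Ω‖² ≤ g(Ω, Ω⁽ⁱ⁾)`. Hence for every feasible `Ω`,
`f(Ω⁽ⁱ⁺¹⁾) + (τ²/2)‖Ω⁽ⁱ⁺¹⁾ − Ω‖² ≤ f(Ω) + (τ²/2)‖Ω⁽ⁱ⁾ − Ω‖²`. With `Ω = Ω°` this telescopes to
the bound on the average; with `Ω = Ω⁽ⁱ⁺¹⁾` it shows that `f` decreases along the iteration, so
the last iterate is no worse than the average.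
-/

section L2OperatorNorm
open scoped Matrix.Norms.L2Operator

lemma sqnorm_eq_norm_sq {ι : Type*} [Fintype ι] (v : ι → ℝ) :
    sqnorm v = ‖WithLp.toLp 2 v‖ ^ 2 := by
  simp [sqnorm, EuclideanSpace.real_norm_sq_eq]

lemma specNorm_eq_l2_opNorm {ι κ : Type*} [Fintype ι] [Fintype κ] (A : Matrix ι κ ℝ) :
    specNorm A = ‖A‖ := by
  rw [Matrix.l2_opNorm_def, ← ContinuousLinearMap.sSup_unitClosedBall_eq_norm, specNorm]
  congr 1
  ext c
  simp only [sqnorm_eq_norm_sq, Real.sqrt_sq (norm_nonneg _), Set.mem_ofPred_eq, Set.mem_image,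
    Metric.mem_closedBall, dist_zero_right]
  constructor
  · rintro ⟨v, hv, rfl⟩
    exact ⟨WithLp.toLp 2 v, by nlinarith [norm_nonneg (WithLp.toLp 2 v)], rfl⟩
  · rintro ⟨x, hx, rfl⟩
    exact ⟨x.ofLp, by simp only [WithLp.toLp_ofLp]; nlinarith [norm_nonneg x], rfl⟩

lemma specNorm_nonneg {ι κ : Type*} [Fintype ι] [Fintype κ] (A : Matrix ι κ ℝ) :
    0 ≤ specNorm A :=
  (specNorm_eq_l2_opNorm A).symm ▸ norm_nonneg A

lemma sqnorm_mulVec_le {ι κ : Type*} [Fintype ι] [Fintype κ] (A : Matrix ι κ ℝ) (v : κ → ℝ) :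
    sqnorm (A *ᵥ v) ≤ specNorm A ^ 2 * sqnorm v := by
  rw [sqnorm_eq_norm_sq, sqnorm_eq_norm_sq, specNorm_eq_l2_opNorm, ← mul_pow]
  exact pow_le_pow_left₀ (norm_nonneg _) (A.l2_opNorm_mulVec (WithLp.toLp 2 v)) 2

end L2OperatorNorm

lemma UniformConvexOn.add_le_of_isMinOn {E : Type*} [NormedAddCommGroup E] [NormedSpace ℝ E]
    {s : Set E} {φ : ℝ → ℝ} {f : E → ℝ} {x y : E} (hf : UniformConvexOn s φ f)
    (hmin : IsMinOn f s x) (hx : x ∈ s) (hy : y ∈ s) :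
    f x + φ ‖x - y‖ ≤ f y := by
  have hseg : ∀ t ∈ Set.Ioo (0 : ℝ) 1, f x + (1 - t) * φ ‖x - y‖ ≤ f y := by
    rintro t ⟨ht0, ht1⟩
    have hmem := hf.1 hx hy (sub_nonneg.2 ht1.le) ht0.le (sub_add_cancel 1 t)
    have hconv := hf.2 hx hy (sub_nonneg.2 ht1.le) ht0.le (sub_add_cancel 1 t)
    have hle : f x ≤ f ((1 - t) • x + t • y) := hmin hmem
    rw [smul_eq_mul, smul_eq_mul] at hconv
    refine le_of_mul_le_mul_left ?_ ht0
    linarith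
  have hlim : Filter.Tendsto (fun t : ℝ => f x + (1 - t) * φ ‖x - y‖) (nhdsWithin 0 (Set.Ioi 0))
      (nhds (f x + φ ‖x - y‖)) := by
    have : Continuous (fun t : ℝ => f x + (1 - t) * φ ‖x - y‖) := by fun_prop
    simpa using (this.tendsto 0).mono_left nhdsWithin_le_nhds
  exact le_of_tendsto hlim (Filter.eventually_of_mem (Ioo_mem_nhdsGT one_pos) hseg)

lemma ConvexOn.finset_sum {E ι : Type*} [AddCommGroup E] [Module ℝ E] {s : Set E}
    {t : Finset ι} {f : ι → E → ℝ} (hs : Convex ℝ s) (hf : ∀ i ∈ t, ConvexOn ℝ s (f i)) :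
    ConvexOn ℝ s (fun x => ∑ i ∈ t, f i x) := by
  induction t using Finset.cons_induction with
  | empty => simpa using convexOn_const 0 hs
  | cons i t _ ih =>
    simp only [Finset.sum_cons]
    exact (hf i (Finset.mem_cons_self i t)).add (ih fun j hj => hf j (Finset.mem_cons_of_mem hj))

lemma convexOn_const_mul_norm_comp {E F : Type*} [AddCommGroup E] [Module ℝ E]
    [NormedAddCommGroup F] [NormedSpace ℝ F] {c : ℝ} (hc : 0 ≤ c) (L : E →ₗ[ℝ] F) :
    ConvexOn ℝ Set.univ (fun x => c * ‖L x‖) :=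
  ((convexOn_norm convex_univ).comp_linearMap L).smul hc

section Frobenius
attribute [local instance] Matrix.frobeniusNormedAddCommGroup Matrix.frobeniusNormedSpace

lemma frobenius_norm_sq {m n : Type*} [Fintype m] [Fintype n] (A : Matrix m n ℝ) :
    ‖A‖ ^ 2 = ∑ i, ∑ j, A i j ^ 2 := by
  rw [Matrix.frobenius_norm_def, ← Real.rpow_natCast, ← Real.rpow_mul (by positivity)]
  norm_num

lemma frobenius_norm_sq_smul_add_smul_sub {m n : Type*} [Fintype m] [Fintype n]
    (A B C : Matrix m n ℝ) {a b : ℝ} (hab : a + b = 1) :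
    ‖a • A + b • B - C‖ ^ 2 = a * ‖A - C‖ ^ 2 + b * ‖B - C‖ ^ 2 - a * b * ‖A - B‖ ^ 2 := by
  obtain rfl := eq_sub_of_add_eq hab
  simp only [frobenius_norm_sq, Matrix.sub_apply, Matrix.add_apply, Matrix.smul_apply,
    smul_eq_mul, Finset.mul_sum, ← Finset.sum_sub_distrib, ← Finset.sum_add_distrib]
  exact Finset.sum_congr rfl fun i _ => Finset.sum_congr rfl fun j _ => by ring

lemma frobenius_norm_sub_sq {m n : Type*} [Fintype m] [Fintype n] (A B : Matrix m n ℝ) :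
    ‖A - B‖ ^ 2 = ∑ i, ∑ j, (A i j - B i j) ^ 2 := by
  simp [frobenius_norm_sq]

variable {n p : ℕ} (W : Matrix (Fin n) (Fin (p + 1) × Fin p) ℝ) (y : Fin n → ℝ)
  (lb : Fin p → ℝ) (LPhi : Matrix (Fin p) (Fin p) ℝ) (lO : Fin p → ℝ) (τ : ℝ)

lemma convex_Sfeas : Convex ℝ (Sfeas p) := by
  intro A hA B hB a b _ _ _ j k
  simp [hA j k, hB j k]

lemma sqnorm_vecM (A : Matrix (Fin (p + 1)) (Fin p) ℝ) : sqnorm (vecM A) = ‖A‖ ^ 2 := by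
  rw [frobenius_norm_sq, sqnorm, Fintype.sum_prod_type]
  rfl

variable {lb LPhi lO} in
lemma convexOn_Pen (hlb : ∀ j, 0 ≤ lb j) (hLPhi : ∀ j k, 0 ≤ LPhi j k) (hlO : ∀ k, 0 ≤ lO k) :
    ConvexOn ℝ Set.univ (Pen lb LPhi lO) := by
  have hcol : ∀ k, ConvexOn ℝ Set.univ
      (fun Ω : Matrix (Fin (p + 1)) (Fin p) ℝ => lO k * √(∑ i, Ω i k ^ 2)) := by
    intro k
    refine (convexOn_const_mul_norm_comp (hlO k) ((WithLp.linearEquiv 2 ℝ _).symm.toLinearMap ∘ₗ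
      LinearMap.pi fun i => Matrix.entryLinearMap ℝ ℝ i k)).congr fun Ω _ => ?_
    simp [EuclideanSpace.norm_eq]
  exact ((ConvexOn.finset_sum convex_univ fun j _ =>
      convexOn_const_mul_norm_comp (hlb j) (Matrix.entryLinearMap ℝ ℝ 0 j)).add
    (ConvexOn.finset_sum convex_univ fun j _ => ConvexOn.finset_sum convex_univ fun k _ =>
      convexOn_const_mul_norm_comp (hLPhi j k) (Matrix.entryLinearMap ℝ ℝ k.succ j))).add
    (ConvexOn.finset_sum convex_univ fun k _ => hcol k)

lemma gSur_eq_fObj_add_sub (Ω Ω' : Matrix (Fin (p + 1)) (Fin p) ℝ) :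
    gSur W y lb LPhi lO τ Ω Ω' = fObj W y lb LPhi lO Ω + τ ^ 2 / 2 * ‖Ω - Ω'‖ ^ 2
      - sqnorm (W *ᵥ vecM (Ω - Ω')) / 2 := by
  unfold gSur fObj lossL
  set r : Fin n → ℝ := fun i => y i - (W *ᵥ vecM Ω') i
  set d := W *ᵥ vecM (Ω - Ω')
  have hres : ∀ i, y i - (W *ᵥ vecM Ω) i = r i - d i := by
    intro i
    simp only [r, d, vecM, Matrix.mulVec, dotProduct, Matrix.sub_apply, mul_sub,
      Finset.sum_sub_distrib]
    ring
  have hlin : ∑ u, (Wᵀ *ᵥ r) u * (vecM Ω u - vecM Ω' u) = ∑ i, r i * d i := by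
    change (Wᵀ *ᵥ r) ⬝ᵥ vecM (Ω - Ω') = r ⬝ᵥ d
    rw [Matrix.mulVec_transpose, Matrix.dotProduct_mulVec]
  have hsq : ∑ i, (r i - d i) ^ 2 = ∑ i, r i ^ 2 - 2 * ∑ i, r i * d i + ∑ i, d i ^ 2 := by
    simp only [Finset.mul_sum, ← Finset.sum_sub_distrib, ← Finset.sum_add_distrib]
    exact Finset.sum_congr rfl fun i _ => by ring
  simp only [hres, hsq, hlin, ← frobenius_norm_sub_sq, sqnorm]
  ring

variable {W τ} in
lemma fObj_le_gSur (hτ : specNorm W ≤ τ) (Ω Ω' : Matrix (Fin (p + 1)) (Fin p) ℝ) :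
    fObj W y lb LPhi lO Ω ≤ gSur W y lb LPhi lO τ Ω Ω' := by
  have hW := sqnorm_mulVec_le W (vecM (Ω - Ω'))
  rw [sqnorm_vecM] at hW
  have hτ2 : specNorm W ^ 2 ≤ τ ^ 2 := pow_le_pow_left₀ (specNorm_nonneg W) hτ 2
  rw [gSur_eq_fObj_add_sub]
  nlinarith [sq_nonneg ‖Ω - Ω'‖]

lemma gSur_le_fObj_add (Ω Ω' : Matrix (Fin (p + 1)) (Fin p) ℝ) :
    gSur W y lb LPhi lO τ Ω Ω' ≤ fObj W y lb LPhi lO Ω + τ ^ 2 / 2 * ‖Ω - Ω'‖ ^ 2 := by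
  rw [gSur_eq_fObj_add_sub]
  linarith [show 0 ≤ sqnorm (W *ᵥ vecM (Ω - Ω')) from Finset.sum_nonneg fun i _ => sq_nonneg _]

variable {lb LPhi lO} in
lemma strongConvexOn_gSur (hlb : ∀ j, 0 ≤ lb j) (hLPhi : ∀ j k, 0 ≤ LPhi j k)
    (hlO : ∀ k, 0 ≤ lO k) (Ω' : Matrix (Fin (p + 1)) (Fin p) ℝ)
    {s : Set (Matrix (Fin (p + 1)) (Fin p) ℝ)} (hs : Convex ℝ s) :
    StrongConvexOn s (τ ^ 2) (fun Ω => gSur W y lb LPhi lO τ Ω Ω') := by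
  refine ⟨hs, fun A _ B _ a b ha hb hab => ?_⟩
  have hpen := (convexOn_Pen hlb hLPhi hlO).2 (Set.mem_univ A) (Set.mem_univ B) ha hb hab
  have hquad := frobenius_norm_sq_smul_add_smul_sub A B Ω' hab
  have hlin : ∀ G : Fin (p + 1) × Fin p → ℝ, ∑ u, G u * (vecM (a • A + b • B) u - vecM Ω' u)
      = a * ∑ u, G u * (vecM A u - vecM Ω' u) + b * ∑ u, G u * (vecM B u - vecM Ω' u) := by
    intro G
    obtain rfl := eq_sub_of_add_eq hab
    simp only [Finset.mul_sum, ← Finset.sum_add_distrib]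
    refine Finset.sum_congr rfl fun u _ => ?_
    simp only [vecM, Matrix.add_apply, Matrix.smul_apply, smul_eq_mul]
    ring
  simp only [gSur, ← frobenius_norm_sub_sq, hlin, smul_eq_mul] at hpen ⊢
  rw [hquad]
  obtain rfl := eq_sub_of_add_eq hab
  linear_combination hpen

variable {W lb LPhi lO τ} in
lemma fObj_add_le_of_isMinOn_gSur (hlb : ∀ j, 0 ≤ lb j) (hLPhi : ∀ j k, 0 ≤ LPhi j k)
    (hlO : ∀ k, 0 ≤ lO k) (hτ : specNorm W ≤ τ) {s : Set (Matrix (Fin (p + 1)) (Fin p) ℝ)}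
    (hs : Convex ℝ s) {Ω' Ωp Ω : Matrix (Fin (p + 1)) (Fin p) ℝ} (hΩp : Ωp ∈ s)
    (hmin : IsMinOn (fun Ω => gSur W y lb LPhi lO τ Ω Ω') s Ωp) (hΩ : Ω ∈ s) :
    fObj W y lb LPhi lO Ωp + τ ^ 2 / 2 * ∑ i, ∑ k, (Ωp i k - Ω i k) ^ 2
      ≤ fObj W y lb LPhi lO Ω + τ ^ 2 / 2 * ∑ i, ∑ k, (Ω' i k - Ω i k) ^ 2 := by
  have hthree := UniformConvexOn.add_le_of_isMinOn
    (strongConvexOn_gSur W y τ hlb hLPhi hlO Ω' hs) hmin hΩp hΩ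
  have hmaj := fObj_le_gSur y lb LPhi lO hτ Ωp Ω'
  have hupper := gSur_le_fObj_add W y lb LPhi lO τ Ω Ω'
  simp only [← frobenius_norm_sub_sq, norm_sub_rev Ω' Ω]
  linarith

end Frobenius

section Telescoping

variable {F d : ℕ → ℝ} {c : ℝ}

lemma sum_range_sub_le_of_add_le (hd : ∀ i, 0 ≤ d i) (h : ∀ i, F (i + 1) + d (i + 1) ≤ c + d i)
    (k : ℕ) : ∑ i ∈ Finset.range k, F (i + 1) - k * c ≤ d 0 := by
  suffices ∑ i ∈ Finset.range k, F (i + 1) - k * c ≤ d 0 - d k by linarith [hd k]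
  induction k with
  | zero => simp
  | succ k ih =>
    rw [Finset.sum_range_succ]
    push_cast
    linarith [h k]

lemma avg_sub_le_and_sub_le_of_add_le (hd : ∀ i, 0 ≤ d i)
    (h : ∀ i, F (i + 1) + d (i + 1) ≤ c + d i) (hF : ∀ i, F (i + 2) ≤ F (i + 1)) {k : ℕ}
    (hk : 1 ≤ k) :
    (∑ i ∈ Finset.range k, F (i + 1)) / k - c ≤ d 0 / k ∧ F k - c ≤ d 0 / k := by
  have hk0 : (0 : ℝ) < k := by exact_mod_cast hk
  have havg : (∑ i ∈ Finset.range k, F (i + 1)) / k - c ≤ d 0 / k := by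
    rw [div_sub' hk0.ne', div_le_div_iff_of_pos_right hk0]
    linarith [sum_range_sub_le_of_add_le hd h k]
  have hlast : F k ≤ (∑ i ∈ Finset.range k, F (i + 1)) / k := by
    have hanti : Antitone fun j => F (j + 1) := antitone_nat_of_succ_le hF
    obtain ⟨m, rfl⟩ := Nat.exists_eq_add_of_le' hk
    rw [le_div_iff₀ hk0]
    calc F (m + 1) * ↑(m + 1) = ∑ _i ∈ Finset.range (m + 1), F (m + 1) := by simp [mul_comm]
      _ ≤ ∑ i ∈ Finset.range (m + 1), F (i + 1) :=
        Finset.sum_le_sum fun i hi => hanti (Nat.lt_succ_iff.1 (Finset.mem_range.1 hi))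
  exact ⟨havg, by linarith⟩

end Telescoping

theorem surrogate_rate_general {n p : ℕ}
    (W : Matrix (Fin n) (Fin (p + 1) × Fin p) ℝ) (y : Fin n → ℝ)
    (lb : Fin p → ℝ) (hlb : ∀ j, 0 ≤ lb j)
    (LPhi : Matrix (Fin p) (Fin p) ℝ) (hLPhi : ∀ j k, 0 ≤ LPhi j k)
    (lO : Fin p → ℝ) (hlO : ∀ k, 0 ≤ lO k)
    (τ : ℝ) (hτ : specNorm W < τ)
    (Ωs : ℕ → Matrix (Fin (p + 1)) (Fin p) ℝ)
    (hstep : ∀ i : ℕ, Ωs (i + 1) ∈ Sfeas p ∧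
      ∀ Ω ∈ Sfeas p,
        gSur W y lb LPhi lO τ (Ωs (i + 1)) (Ωs i) ≤ gSur W y lb LPhi lO τ Ω (Ωs i))
    (Ωo : Matrix (Fin (p + 1)) (Fin p) ℝ) (hΩo : Ωo ∈ Sfeas p)
    (k : ℕ) (hk : 1 ≤ k) :
    (∑ i ∈ Finset.range k, fObj W y lb LPhi lO (Ωs (i + 1))) / (k : ℝ)
        - fObj W y lb LPhi lO Ωo
      ≤ τ ^ 2 * (∑ i, ∑ j, (Ωs 0 i j - Ωo i j) ^ 2) / (2 * (k : ℝ)) ∧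
    fObj W y lb LPhi lO (Ωs k) - fObj W y lb LPhi lO Ωo
      ≤ τ ^ 2 * (∑ i, ∑ j, (Ωs 0 i j - Ωo i j) ^ 2) / (2 * (k : ℝ)) := by
  have hdesc : ∀ i, ∀ Ω ∈ Sfeas p,
      fObj W y lb LPhi lO (Ωs (i + 1)) + τ ^ 2 / 2 * ∑ a, ∑ b, (Ωs (i + 1) a b - Ω a b) ^ 2
        ≤ fObj W y lb LPhi lO Ω + τ ^ 2 / 2 * ∑ a, ∑ b, (Ωs i a b - Ω a b) ^ 2 :=
    fun i _ hΩ => fObj_add_le_of_isMinOn_gSur y hlb hLPhi hlO hτ.le convex_Sfeas (hstep i).1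
      (isMinOn_iff.2 (hstep i).2) hΩ
  have hmono : ∀ i, fObj W y lb LPhi lO (Ωs (i + 2)) ≤ fObj W y lb LPhi lO (Ωs (i + 1)) := by
    intro i
    have h := hdesc (i + 1) (Ωs (i + 1)) (hstep i).1
    simp only [sub_self, zero_pow two_ne_zero, Finset.sum_const_zero, mul_zero, add_zero] at h
    exact (le_add_of_nonneg_right (by positivity)).trans h
  have hrate := avg_sub_le_and_sub_le_of_add_le (F := fun i => fObj W y lb LPhi lO (Ωs i))
    (d := fun i => τ ^ 2 / 2 * ∑ a, ∑ b, (Ωs i a b - Ωo a b) ^ 2)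
    (fun i => by positivity) (fun i => hdesc i Ωo hΩo) hmono hk
  rwa [div_mul_eq_mul_div, div_div] at hrate

/-- **O(1/k) convergence rate of the exact surrogate (majorize–minimize) iteration**:
if `τ > ‖W‖₂` and at each step `Ω^{(i+1)}` minimizes `g(·, Ω^{(i)})` over `𝒮`, then
for every global minimizer `Ω°` of `f` over `𝒮` and every `k ≥ 1`,
`(1/k) Σ_{i=1}^k f(Ω^{(i)}) − f(Ω°) ≤ τ²‖Ω⁽⁰⁾ − Ω°‖_F²/(2k)` and consequently
`f(Ω^{(k)}) − f(Ω°) ≤ τ²‖Ω⁽⁰⁾ − Ω°‖_F²/(2k)`. -/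
theorem surrogate_rate {n p : ℕ} (hn : 1 ≤ n) (hp : 1 ≤ p)
    (W : Matrix (Fin n) (Fin (p + 1) × Fin p) ℝ) (y : Fin n → ℝ)
    (lb : Fin p → ℝ) (hlb : ∀ j, 0 ≤ lb j)
    (LPhi : Matrix (Fin p) (Fin p) ℝ) (hLPhi : ∀ j k, 0 ≤ LPhi j k)
    (lO : Fin p → ℝ) (hlO : ∀ k, 0 ≤ lO k)
    (τ : ℝ) (hτ : specNorm W < τ)
    (Ωs : ℕ → Matrix (Fin (p + 1)) (Fin p) ℝ) (h0 : Ωs 0 ∈ Sfeas p)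
    (hstep : ∀ i : ℕ, Ωs (i + 1) ∈ Sfeas p ∧
      ∀ Ω ∈ Sfeas p,
        gSur W y lb LPhi lO τ (Ωs (i + 1)) (Ωs i) ≤ gSur W y lb LPhi lO τ Ω (Ωs i))
    (Ωo : Matrix (Fin (p + 1)) (Fin p) ℝ) (hΩo : Ωo ∈ Sfeas p)
    (hΩomin : ∀ Ω ∈ Sfeas p, fObj W y lb LPhi lO Ωo ≤ fObj W y lb LPhi lO Ω)
    (k : ℕ) (hk : 1 ≤ k) :
    (∑ i ∈ Finset.range k, fObj W y lb LPhi lO (Ωs (i + 1))) / (k : ℝ)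
        - fObj W y lb LPhi lO Ωo
      ≤ τ ^ 2 * (∑ i, ∑ j, (Ωs 0 i j - Ωo i j) ^ 2) / (2 * (k : ℝ)) ∧
    fObj W y lb LPhi lO (Ωs k) - fObj W y lb LPhi lO Ωo
      ≤ τ ^ 2 * (∑ i, ∑ j, (Ωs 0 i j - Ωo i j) ^ 2) / (2 * (k : ℝ)) :=
  surrogate_rate_general W y lb hlb LPhi hLPhi lO hlO τ hτ Ωs hstep Ωo hΩo k hk
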